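/- Approximate intertwining for B1: Let S = (ψ, A0, A1, B0, B1) be a CHSH strategy on finite-dimensional complex inner product spaces H_A, H_B with bias β(S) ≥ 2√2 − ε for some ε ≥ 0. Let V_B : H_B → ℂ² ⊗ H_B be the Bob extractor: V_B(v) := U_B(|aux⟩ ⊗ v) with U_B := (R ⊗ I) ∘ control(B1) ∘ (Had ⊗ I) ∘ control(B0) ∘ (Had ⊗ I) ∘ (R† ⊗ I), R := sin(π/8)·X + cos(π/8)·Z, |aux⟩ := R|0⟩. Then ‖(I ⊗ ((H' ⊗ I) ∘ V_B − V_B ∘ B1)) ψ‖ ≤ √(c·ε), where c := 128√2 and H' := (Z−X)/√2. -/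

import Mathlib

set_option maxHeartbeats 1000000
set_option synthInstance.maxHeartbeats 400000
set_option synthInstance.maxSize 2048

noncomputable section

open scoped TensorProduct
open Module

/-! ## The canonical inner product space structure on tensor products -/

section TensorInner

variable (E F : Type*) [NormedAddCommGroup E] [InnerProductSpace ℂ E] [FiniteDimensional ℂ E]
  [NormedAddCommGroup F] [InnerProductSpace ℂ F] [FiniteDimensional ℂ F]

/-- Coordinate representation of `E ⊗[ℂ] F` with respect to the tensor product of
orthonormal bases of `E` and `F`. -/
def tensorRepr : (E ⊗[ℂ] F) ≃ₗ[ℂ]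
    EuclideanSpace ℂ (Fin (finrank ℂ E) × Fin (finrank ℂ F)) :=
  (((stdOrthonormalBasis ℂ E).toBasis.tensorProduct
      (stdOrthonormalBasis ℂ F).toBasis).equivFun).trans
    (WithLp.linearEquiv 2 ℂ ((Fin (finrank ℂ E) × Fin (finrank ℂ F)) → ℂ)).symm

/-- The canonical inner product on the tensor product of two finite-dimensional complex
inner product spaces; it satisfies `⟪a ⊗ b, c ⊗ d⟫ = ⟪a, c⟫ * ⟪b, d⟫`. -/
def tensorCore : InnerProductSpace.Core ℂ (E ⊗[ℂ] F) where
  inner x y := inner ℂ (tensorRepr E F x) (tensorRepr E F y)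
  conj_inner_symm x y := inner_conj_symm (𝕜 := ℂ) (tensorRepr E F x) (tensorRepr E F y)
  re_inner_nonneg x := inner_self_nonneg (𝕜 := ℂ) (x := tensorRepr E F x)
  add_left x y z := by simp [map_add, inner_add_left]
  smul_left x y r := by simp [map_smul, inner_smul_left, mul_comm]
  definite x h := by
    have h0 : tensorRepr E F x = 0 := inner_self_eq_zero.mp h
    simpa using (LinearEquiv.map_eq_zero_iff _).mp h0

noncomputable instance tensorNormedAddCommGroup : NormedAddCommGroup (E ⊗[ℂ] F) :=
  (tensorCore E F).toNormedAddCommGroup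

noncomputable instance tensorInnerProductSpace : InnerProductSpace ℂ (E ⊗[ℂ] F) :=
  InnerProductSpace.ofCore (tensorCore E F).toCore

end TensorInner

notation "⟪" x ", " y "⟫" => (inner (𝕜 := ℂ) x y)

/-! ## Qubits, standard states and gates -/

/-- The qubit space `ℂ²`. -/
abbrev Qubit := EuclideanSpace ℂ (Fin 2)

/-- The standard basis state `|0⟩`. -/
def ket0 : Qubit := EuclideanSpace.single 0 1

/-- The standard basis state `|1⟩`. -/
def ket1 : Qubit := EuclideanSpace.single 1 1

/-- The rank-one operator `|a⟩⟨b|` on an inner product space. -/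
def ketbra {H : Type*} [NormedAddCommGroup H] [InnerProductSpace ℂ H] (a b : H) :
    H →ₗ[ℂ] H where
  toFun v := (inner ℂ b v : ℂ) • a
  map_add' u v := by simp [inner_add_right, add_smul]
  map_smul' c v := by simp [inner_smul_right, smul_smul]

/-- The projector `|0⟩⟨0|`. -/
def proj0 : Qubit →ₗ[ℂ] Qubit := ketbra ket0 ket0

/-- The projector `|1⟩⟨1|`. -/
def proj1 : Qubit →ₗ[ℂ] Qubit := ketbra ket1 ket1

/-- The Pauli operator `σ_z = |0⟩⟨0| - |1⟩⟨1|`. -/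
def pauliZ : Qubit →ₗ[ℂ] Qubit := ketbra ket0 ket0 - ketbra ket1 ket1

/-- The Pauli operator `σ_x = |0⟩⟨1| + |1⟩⟨0|`. -/
def pauliX : Qubit →ₗ[ℂ] Qubit := ketbra ket0 ket1 + ketbra ket1 ket0

/-- The Hadamard gate `H = (Z + X)/√2`. -/
def Hadamard : Qubit →ₗ[ℂ] Qubit := ((Real.sqrt 2 : ℂ))⁻¹ • (pauliZ + pauliX)

/-- The reflected Hadamard gate `H' = (Z - X)/√2`. -/
def HadamardPrime : Qubit →ₗ[ℂ] Qubit := ((Real.sqrt 2 : ℂ))⁻¹ • (pauliZ - pauliX)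

/-- The rotation `R = sin(π/8)·X + cos(π/8)·Z`, satisfying `RZR† = H`, `RXR† = H'`. -/
def Rotation : Qubit →ₗ[ℂ] Qubit :=
  (Real.sin (Real.pi / 8) : ℂ) • pauliX + (Real.cos (Real.pi / 8) : ℂ) • pauliZ

/-! ## Bell states -/

/-- The Bell state `|Φ+⟩ = (|00⟩ + |11⟩)/√2`. -/
def bellPhiPlus : Qubit ⊗[ℂ] Qubit :=
  ((Real.sqrt 2 : ℂ))⁻¹ • (ket0 ⊗ₜ[ℂ] ket0 + ket1 ⊗ₜ[ℂ] ket1)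

/-- The Bell state `|Φ−⟩ = (|00⟩ − |11⟩)/√2`. -/
def bellPhiMinus : Qubit ⊗[ℂ] Qubit :=
  ((Real.sqrt 2 : ℂ))⁻¹ • (ket0 ⊗ₜ[ℂ] ket0 - ket1 ⊗ₜ[ℂ] ket1)

/-- The Bell state `|Ψ+⟩ = (|01⟩ + |10⟩)/√2`. -/
def bellPsiPlus : Qubit ⊗[ℂ] Qubit :=
  ((Real.sqrt 2 : ℂ))⁻¹ • (ket0 ⊗ₜ[ℂ] ket1 + ket1 ⊗ₜ[ℂ] ket0)

/-- The Bell state `|Ψ−⟩ = (|01⟩ − |10⟩)/√2`. -/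
def bellPsiMinus : Qubit ⊗[ℂ] Qubit :=
  ((Real.sqrt 2 : ℂ))⁻¹ • (ket0 ⊗ₜ[ℂ] ket1 - ket1 ⊗ₜ[ℂ] ket0)

/-! ## Binary observables and CHSH strategies -/

/-- A binary observable: a symmetric (self-adjoint) involution. -/
structure IsBinaryObservable {H : Type*} [NormedAddCommGroup H] [InnerProductSpace ℂ H]
    (A : H →ₗ[ℂ] H) : Prop where
  symm : A.IsSymmetric
  sq_one : A ∘ₗ A = LinearMap.id

variable {H_A H_B : Type*}
  [NormedAddCommGroup H_A] [InnerProductSpace ℂ H_A] [FiniteDimensional ℂ H_A]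
  [NormedAddCommGroup H_B] [InnerProductSpace ℂ H_B] [FiniteDimensional ℂ H_B]

/-- A CHSH strategy: a shared unit state together with two binary observables per party. -/
structure CHSHStrategy (H_A H_B : Type*)
    [NormedAddCommGroup H_A] [InnerProductSpace ℂ H_A] [FiniteDimensional ℂ H_A]
    [NormedAddCommGroup H_B] [InnerProductSpace ℂ H_B] [FiniteDimensional ℂ H_B] where
  psi : H_A ⊗[ℂ] H_B
  psi_norm : ‖psi‖ = 1
  A0 : H_A →ₗ[ℂ] H_A
  A1 : H_A →ₗ[ℂ] H_A
  B0 : H_B →ₗ[ℂ] H_B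
  B1 : H_B →ₗ[ℂ] H_B
  A0_bin : IsBinaryObservable A0
  A1_bin : IsBinaryObservable A1
  B0_bin : IsBinaryObservable B0
  B1_bin : IsBinaryObservable B1

/-- The general CHSH operator `A0⊗B0 + A0⊗B1 + A1⊗B0 − A1⊗B1`. -/
def CHSH_op (A0 A1 : H_A →ₗ[ℂ] H_A) (B0 B1 : H_B →ₗ[ℂ] H_B) :
    H_A ⊗[ℂ] H_B →ₗ[ℂ] H_A ⊗[ℂ] H_B :=
  TensorProduct.map A0 B0 + TensorProduct.map A0 B1 +
    TensorProduct.map A1 B0 - TensorProduct.map A1 B1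

/-- The CHSH bias `β(S) = Re⟨ψ, CHSH ψ⟩` of a strategy. -/
def chshBias (S : CHSHStrategy H_A H_B) : ℝ :=
  (⟪S.psi, (CHSH_op S.A0 S.A1 S.B0 S.B1) S.psi⟫).re

/-- Alice's observable acting on the shared state. -/
def applyAlice (A : H_A →ₗ[ℂ] H_A) : H_A ⊗[ℂ] H_B →ₗ[ℂ] H_A ⊗[ℂ] H_B :=
  TensorProduct.map A LinearMap.id

/-- Bob's observable acting on the shared state. -/
def applyBob (B : H_B →ₗ[ℂ] H_B) : H_A ⊗[ℂ] H_B →ₗ[ℂ] H_A ⊗[ℂ] H_B :=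
  TensorProduct.map LinearMap.id B

/-! ## The extraction circuit -/

variable {H : Type*} [NormedAddCommGroup H] [InnerProductSpace ℂ H] [FiniteDimensional ℂ H]

/-- Ancilla embedding `v ↦ |aux⟩ ⊗ v`. -/
def embed (aux : Qubit) : H →ₗ[ℂ] (Qubit ⊗[ℂ] H) :=
  (TensorProduct.mk ℂ Qubit H) aux

/-- Controlled gate `|0⟩⟨0| ⊗ I + |1⟩⟨1| ⊗ A`. -/
def controlGate (A : H →ₗ[ℂ] H) : (Qubit ⊗[ℂ] H) →ₗ[ℂ] (Qubit ⊗[ℂ] H) :=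
  TensorProduct.map proj0 (LinearMap.id : H →ₗ[ℂ] H) + TensorProduct.map proj1 A

/-- The extraction unitary `U_A = C_{A1}(H ⊗ I)C_{A0}(H ⊗ I)`. -/
def unitaryUA (A0 A1 : H →ₗ[ℂ] H) : (Qubit ⊗[ℂ] H) →ₗ[ℂ] (Qubit ⊗[ℂ] H) :=
  (controlGate A1) ∘ₗ (TensorProduct.map Hadamard LinearMap.id) ∘ₗ
    (controlGate A0) ∘ₗ (TensorProduct.map Hadamard LinearMap.id)

/-- Alice's extractor `V_A = U_A (|0⟩ ⊗ ·)`. -/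
def VA (A0 A1 : H →ₗ[ℂ] H) : H →ₗ[ℂ] (Qubit ⊗[ℂ] H) :=
  (unitaryUA A0 A1) ∘ₗ (embed ket0)

/-- Bob's rotated extraction unitary `U_B = (R ⊗ I) U_A(B0,B1) (R† ⊗ I)`. -/
def unitaryUB (B0 B1 : H →ₗ[ℂ] H) : (Qubit ⊗[ℂ] H) →ₗ[ℂ] (Qubit ⊗[ℂ] H) :=
  (TensorProduct.map Rotation LinearMap.id) ∘ₗ (unitaryUA B0 B1) ∘ₗ
    (TensorProduct.map (LinearMap.adjoint Rotation) LinearMap.id)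

/-- Bob's rotated ancilla `|aux⟩ = R|0⟩`. -/
def auxState : Qubit := Rotation ket0

/-- Bob's extractor `V_B = U_B (|aux⟩ ⊗ ·)`. -/
def VB (B0 B1 : H →ₗ[ℂ] H) : H →ₗ[ℂ] (Qubit ⊗[ℂ] H) :=
  (unitaryUB B0 B1) ∘ₗ (embed auxState)

/-! ## Tensor regrouping -/

/-- The canonical regrouping isomorphism
`(ℂ² ⊗ H_A) ⊗ (ℂ² ⊗ H_B) ≃ (ℂ² ⊗ ℂ²) ⊗ (H_A ⊗ H_B)`. -/
def regSwap (H_A H_B : Type*)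
    [NormedAddCommGroup H_A] [InnerProductSpace ℂ H_A] [FiniteDimensional ℂ H_A]
    [NormedAddCommGroup H_B] [InnerProductSpace ℂ H_B] [FiniteDimensional ℂ H_B] :
    ((Qubit ⊗[ℂ] H_A) ⊗[ℂ] (Qubit ⊗[ℂ] H_B)) ≃ₗ[ℂ]
      ((Qubit ⊗[ℂ] Qubit) ⊗[ℂ] (H_A ⊗[ℂ] H_B)) :=
  (TensorProduct.assoc ℂ Qubit H_A (Qubit ⊗[ℂ] H_B)).trans <|
    (TensorProduct.congr (LinearEquiv.refl ℂ Qubit)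
      (((TensorProduct.assoc ℂ H_A Qubit H_B).symm.trans
        (TensorProduct.congr (TensorProduct.comm ℂ H_A Qubit) (LinearEquiv.refl ℂ H_B))).trans
          (TensorProduct.assoc ℂ Qubit H_A H_B))).trans
      (TensorProduct.assoc ℂ Qubit Qubit (H_A ⊗[ℂ] H_B)).symm

/-! ## The canonical two-qubit CHSH operator and the constants -/

/-- The canonical two-qubit CHSH operator `K = Z⊗H + Z⊗H' + X⊗H − X⊗H'`. -/
def K : (Qubit ⊗[ℂ] Qubit) →ₗ[ℂ] (Qubit ⊗[ℂ] Qubit) :=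
  TensorProduct.map pauliZ Hadamard + TensorProduct.map pauliZ HadamardPrime +
    TensorProduct.map pauliX Hadamard - TensorProduct.map pauliX HadamardPrime

/-- The constant `c = 128√2` in the anticommutator bounds. -/
def cConst : ℝ := 128 * Real.sqrt 2

/-- The error function `δ(ε) = ε + 4√(cε)`. -/
def delta (ε : ℝ) : ℝ := ε + 4 * Real.sqrt (cConst * ε)

end

open scoped TensorProduct
open Module

/-!
Since `H' R = R X` and `R† |aux⟩ = |0⟩`, the defect `(H' ⊗ I) V_B - V_B B1` equals `R ⊗ I` applied
to `½ (|1⟩ ⊗ B1 {B0, B1} - |0⟩ ⊗ {B0, B1})`, so on `ψ` its norm is at most `‖(I ⊗ {B0, B1}) ψ‖`.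
Viewing the strategy as commuting operators on `H_A ⊗ H_B`, the CHSH operator satisfies
`W² = 4 + [A1, A0] [B0, B1]`, so a bias close to `2√2` forces `‖[B0, B1] ψ‖` close to `2`;
the parallelogram law `‖{B0, B1} ψ‖² + ‖[B0, B1] ψ‖² = 4` then gives `‖{B0, B1} ψ‖² ≤ 8√2 ε`.
-/

section CommutingStrategy

variable {V : Type*} [NormedAddCommGroup V] [InnerProductSpace ℂ V]

namespace IsBinaryObservable

variable {A : V →ₗ[ℂ] V}

theorem apply_apply (hA : IsBinaryObservable A) (v : V) : A (A v) = v :=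
  LinearMap.congr_fun hA.sq_one v

theorem inner_map_map (hA : IsBinaryObservable A) (v w : V) : ⟪A v, A w⟫ = ⟪v, w⟫ := by
  rw [hA.symm, hA.apply_apply]

theorem norm_map (hA : IsBinaryObservable A) (v : V) : ‖A v‖ = ‖v‖ := by
  rw [norm_eq_sqrt_re_inner (𝕜 := ℂ), hA.inner_map_map, ← norm_eq_sqrt_re_inner]

end IsBinaryObservable

theorem isBinaryObservable_id : IsBinaryObservable (LinearMap.id : V →ₗ[ℂ] V) :=
  ⟨LinearMap.IsSymmetric.one, LinearMap.id_comp _⟩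

theorem norm_anticomm_sq_add_norm_comm_sq {B0 B1 : Module.End ℂ V} (hB0 : IsBinaryObservable B0)
    (hB1 : IsBinaryObservable B1) (v : V) :
    ‖(B0 * B1 + B1 * B0) v‖ ^ 2 + ‖(B0 * B1 - B1 * B0) v‖ ^ 2 = 4 * ‖v‖ ^ 2 := by
  have hpar := parallelogram_law_with_norm ℂ (B0 (B1 v)) (B1 (B0 v))
  rw [hB0.norm_map, hB1.norm_map, hB1.norm_map, hB0.norm_map] at hpar
  simp only [LinearMap.add_apply, LinearMap.sub_apply, Module.End.mul_apply]
  linear_combination hpar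

theorem re_inner_commutator_le {A0 A1 : Module.End ℂ V} (hA0 : IsBinaryObservable A0)
    (hA1 : IsBinaryObservable A1) (v w : V) :
    (⟪v, (A1 * A0 - A0 * A1) w⟫).re ≤ 2 * ‖v‖ * ‖w‖ := by
  have hadj : ⟪v, (A1 * A0 - A0 * A1) w⟫ = ⟪(A0 * A1 - A1 * A0) v, w⟫ := by
    simp only [LinearMap.sub_apply, Module.End.mul_apply, inner_sub_left, inner_sub_right]
    rw [hA0.symm (A1 v), hA1.symm v, hA1.symm (A0 v), hA0.symm v]
  have hnorm : ‖(A0 * A1 - A1 * A0) v‖ ≤ 2 * ‖v‖ := by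
    calc _ ≤ ‖A0 (A1 v)‖ + ‖A1 (A0 v)‖ := norm_sub_le _ _
      _ = 2 * ‖v‖ := by rw [hA0.norm_map, hA1.norm_map, hA1.norm_map,
          hA0.norm_map]; ring
  calc (⟪v, (A1 * A0 - A0 * A1) w⟫).re ≤ ‖⟪(A0 * A1 - A1 * A0) v, w⟫‖ := by
        rw [hadj]; exact Complex.re_le_norm _
    _ ≤ ‖(A0 * A1 - A1 * A0) v‖ * ‖w‖ := norm_inner_le_norm _ _
    _ ≤ 2 * ‖v‖ * ‖w‖ := by gcongr

def chshOperator (A0 A1 B0 B1 : Module.End ℂ V) : Module.End ℂ V :=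
  A0 * B0 + A0 * B1 + A1 * B0 - A1 * B1

/-- A CHSH strategy in the commuting-operator model: both parties act on one space `V`. -/
structure IsCommutingStrategy (A0 A1 B0 B1 : Module.End ℂ V) : Prop where
  A0_bin : IsBinaryObservable A0
  A1_bin : IsBinaryObservable A1
  B0_bin : IsBinaryObservable B0
  B1_bin : IsBinaryObservable B1
  comm00 : Commute A0 B0
  comm01 : Commute A0 B1
  comm10 : Commute A1 B0
  comm11 : Commute A1 B1

namespace IsCommutingStrategy

variable {A0 A1 B0 B1 : Module.End ℂ V}

theorem chshOperator_isSymmetric (h : IsCommutingStrategy A0 A1 B0 B1) :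
    (chshOperator A0 A1 B0 B1).IsSymmetric :=
  (((h.A0_bin.symm.mul_of_commute h.B0_bin.symm h.comm00).add
    (h.A0_bin.symm.mul_of_commute h.B1_bin.symm h.comm01)).add
      (h.A1_bin.symm.mul_of_commute h.B0_bin.symm h.comm10)).sub
        (h.A1_bin.symm.mul_of_commute h.B1_bin.symm h.comm11)

theorem chshOperator_mul_self (h : IsCommutingStrategy A0 A1 B0 B1) :
    chshOperator A0 A1 B0 B1 * chshOperator A0 A1 B0 B1
      = 4 + (A1 * A0 - A0 * A1) * (B0 * B1 - B1 * B0) := by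
  have c00 (v : V) : B0 (A0 v) = A0 (B0 v) := (LinearMap.congr_fun h.comm00.eq v).symm
  have c01 (v : V) : B1 (A0 v) = A0 (B1 v) := (LinearMap.congr_fun h.comm01.eq v).symm
  have c10 (v : V) : B0 (A1 v) = A1 (B0 v) := (LinearMap.congr_fun h.comm10.eq v).symm
  have c11 (v : V) : B1 (A1 v) = A1 (B1 v) := (LinearMap.congr_fun h.comm11.eq v).symm
  ext v
  simp only [chshOperator, Module.End.mul_apply, LinearMap.add_apply, LinearMap.sub_apply,
    map_add, map_sub, c00, c01, c10, c11, h.A0_bin.apply_apply, h.A1_bin.apply_apply,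
    h.B0_bin.apply_apply, h.B1_bin.apply_apply, Module.End.ofNat_apply]
  module

theorem norm_chshOperator_sq (h : IsCommutingStrategy A0 A1 B0 B1) (v : V) :
    ‖chshOperator A0 A1 B0 B1 v‖ ^ 2
      = 4 * ‖v‖ ^ 2 + (⟪v, (A1 * A0 - A0 * A1) ((B0 * B1 - B1 * B0) v)⟫).re := by
  have hsq (x : V) : ‖x‖ ^ 2 = (⟪x, x⟫).re := by
    rw [inner_self_eq_norm_sq_to_K]; norm_cast
  rw [hsq, hsq, h.chshOperator_isSymmetric, ← Module.End.mul_apply, h.chshOperator_mul_self,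
    LinearMap.add_apply, Module.End.ofNat_apply, inner_add_right, ← ofNat_smul_eq_nsmul ℂ 4,
    inner_smul_right, Complex.add_re, Module.End.mul_apply]
  congr 1
  simp

theorem norm_anticomm_sq_le (h : IsCommutingStrategy A0 A1 B0 B1) {ψ : V} (hψ : ‖ψ‖ = 1)
    {ε : ℝ} (hβ : 2 * √2 - ε ≤ (⟪ψ, chshOperator A0 A1 B0 B1 ψ⟫).re) :
    ‖(B0 * B1 + B1 * B0) ψ‖ ^ 2 ≤ 8 * √2 * ε := by
  set w := ‖chshOperator A0 A1 B0 B1 ψ‖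
  set t := ‖(B0 * B1 + B1 * B0) ψ‖
  set u := ‖(B0 * B1 - B1 * B0) ψ‖
  have hw : 2 * √2 - ε ≤ w := by
    calc _ ≤ _ := hβ
      _ ≤ ‖⟪ψ, chshOperator A0 A1 B0 B1 ψ⟫‖ := Complex.re_le_norm _
      _ ≤ ‖ψ‖ * w := norm_inner_le_norm _ _
      _ = w := by rw [hψ, one_mul]
  have hw2 : w ^ 2 ≤ 4 + 2 * u := by
    have hcross := re_inner_commutator_le h.A0_bin h.A1_bin ψ ((B0 * B1 - B1 * B0) ψ)
    have hW := h.norm_chshOperator_sq ψ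
    rw [hψ] at hcross hW
    linarith
  have htu : t ^ 2 + u ^ 2 = 4 := by
    rw [norm_anticomm_sq_add_norm_comm_sq h.B0_bin h.B1_bin, hψ]; ring
  -- `w² ≤ 4 + 2u ≤ 8` gives `w ≤ 2√2`, hence `4 - 2u ≤ 8 - w² ≤ 4√2 ε`;
  -- finally `t² = (2 - u)(2 + u) ≤ 4 (2 - u)`.
  have hsqrt2 : √2 * √2 = 2 := Real.mul_self_sqrt zero_le_two
  have hu2 : u ≤ 2 := by nlinarith [sq_nonneg t, norm_nonneg ((B0 * B1 - B1 * B0) ψ)]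
  have hw2' : w ≤ 2 * √2 := by
    nlinarith [norm_nonneg (chshOperator A0 A1 B0 B1 ψ), Real.sqrt_nonneg 2]
  have hu : 2 - u ≤ 2 * √2 * ε := by
    nlinarith [norm_nonneg (chshOperator A0 A1 B0 B1 ψ), Real.sqrt_nonneg 2]
  nlinarith [norm_nonneg ((B0 * B1 - B1 * B0) ψ)]

end IsCommutingStrategy
end CommutingStrategy

section TensorInnerProduct

variable {E F E₂ F₂ : Type*}
  [NormedAddCommGroup E] [InnerProductSpace ℂ E] [FiniteDimensional ℂ E]
  [NormedAddCommGroup F] [InnerProductSpace ℂ F] [FiniteDimensional ℂ F]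
  [NormedAddCommGroup E₂] [InnerProductSpace ℂ E₂] [FiniteDimensional ℂ E₂]
  [NormedAddCommGroup F₂] [InnerProductSpace ℂ F₂] [FiniteDimensional ℂ F₂]

/-- On `E ⊗[ℂ] F`, `inner ℂ` elaborates to Mathlib's `TensorProduct.instInner`, while norms come
from `tensorInnerProductSpace`; the two inner products agree. -/
theorem inner_tensorInnerProductSpace (x y : E ⊗[ℂ] F) :
    @inner ℂ _ (tensorInnerProductSpace E F).toInner x y = inner ℂ x y := by
  let _ : NormedAddCommGroup (E ⊗[ℂ] F) := TensorProduct.instNormedAddCommGroup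
  let _ : InnerProductSpace ℂ (E ⊗[ℂ] F) := TensorProduct.instInnerProductSpace
  let b := (stdOrthonormalBasis ℂ E).tensorProduct (stdOrthonormalBasis ℂ F)
  have hrepr : ∀ z, tensorRepr E F z = b.repr z := fun z => by
    ext i
    simp [b, tensorRepr, ← OrthonormalBasis.coe_toBasis_repr_apply]
  change inner ℂ (tensorRepr E F x) (tensorRepr E F y) = _
  rw [hrepr, hrepr, LinearIsometryEquiv.inner_map_map]

theorem norm_eq_sqrt_re_inner_tensor (x : E ⊗[ℂ] F) : ‖x‖ = √(inner ℂ x x).re := by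
  rw [norm_eq_sqrt_re_inner (𝕜 := ℂ), inner_tensorInnerProductSpace]
  rfl

theorem norm_tensorMap {f : E →ₗ[ℂ] E₂} {g : F →ₗ[ℂ] F₂} (hf : ∀ x, ‖f x‖ = ‖x‖)
    (hg : ∀ y, ‖g y‖ = ‖y‖) (z : E ⊗[ℂ] F) : ‖TensorProduct.map f g z‖ = ‖z‖ := by
  rw [norm_eq_sqrt_re_inner_tensor, norm_eq_sqrt_re_inner_tensor]
  exact congrArg (√·.re) (TensorProduct.inner_map_map (⟨f, hf⟩ : E →ₗᵢ[ℂ] E₂) ⟨g, hg⟩ z z)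

theorem norm_tmul_tensor (a : E) (b : F) : ‖a ⊗ₜ[ℂ] b‖ = ‖a‖ * ‖b‖ := by
  rw [norm_eq_sqrt_re_inner_tensor, TensorProduct.inner_tmul, inner_self_eq_norm_sq_to_K,
    inner_self_eq_norm_sq_to_K, ← mul_pow]
  norm_cast
  exact Real.sqrt_sq (by positivity)

theorem LinearMap.IsSymmetric.tensorMap {A : E →ₗ[ℂ] E} {B : F →ₗ[ℂ] F} (hA : A.IsSymmetric)
    (hB : B.IsSymmetric) : (TensorProduct.map A B).IsSymmetric := by
  intro x y
  rw [inner_tensorInnerProductSpace, inner_tensorInnerProductSpace]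
  let _ : NormedAddCommGroup (E ⊗[ℂ] F) := TensorProduct.instNormedAddCommGroup
  let _ : InnerProductSpace ℂ (E ⊗[ℂ] F) := TensorProduct.instInnerProductSpace
  have : (TensorProduct.map A B).IsSymmetric := by
    rw [LinearMap.isSymmetric_iff_isSelfAdjoint, IsSelfAdjoint, LinearMap.star_eq_adjoint,
      TensorProduct.adjoint_map, hA.adjoint_eq, hB.adjoint_eq]
  exact this x y

theorem IsBinaryObservable.tensorMap {A : E →ₗ[ℂ] E} {B : F →ₗ[ℂ] F}
    (hA : IsBinaryObservable A) (hB : IsBinaryObservable B) :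
    IsBinaryObservable (TensorProduct.map A B) where
  symm := hA.symm.tensorMap hB.symm
  sq_one := by rw [← TensorProduct.map_comp, hA.sq_one, hB.sq_one, TensorProduct.map_id]

theorem norm_lTensor_half_sub_le {f g : F →ₗ[ℂ] F₂} (hf : ∀ y, ‖f y‖ = ‖y‖)
    (hg : ∀ y, ‖g y‖ = ‖y‖) (z : E ⊗[ℂ] F) : ‖((2 : ℂ)⁻¹ • (f - g)).lTensor E z‖ ≤ ‖z‖ := by
  have hf' : ‖f.lTensor E z‖ = ‖z‖ := norm_tensorMap (fun _ => rfl) hf z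
  have hg' : ‖g.lTensor E z‖ = ‖z‖ := norm_tensorMap (fun _ => rfl) hg z
  rw [LinearMap.lTensor_smul, LinearMap.lTensor_sub, LinearMap.smul_apply, LinearMap.sub_apply,
    norm_smul]
  calc ‖(2 : ℂ)⁻¹‖ * ‖f.lTensor E z - g.lTensor E z‖
      ≤ 2⁻¹ * (‖f.lTensor E z‖ + ‖g.lTensor E z‖) := by
        rw [norm_inv, Complex.norm_two]; gcongr; exact norm_sub_le _ _
    _ = ‖z‖ := by rw [hf', hg']; ring

end TensorInnerProduct

theorem commute_rTensor_lTensor {R M N : Type*} [CommSemiring R] [AddCommMonoid M] [Module R M]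
    [AddCommMonoid N] [Module R N] (f : Module.End R M) (g : Module.End R N) :
    Commute (f.rTensor N) (g.lTensor M) :=
  (LinearMap.rTensor_comp_lTensor (f := f) (g := g)).trans
    (LinearMap.lTensor_comp_rTensor (f := f) (g := g)).symm

section CHSHStrategy

variable {H_A H_B : Type*}
  [NormedAddCommGroup H_A] [InnerProductSpace ℂ H_A] [FiniteDimensional ℂ H_A]
  [NormedAddCommGroup H_B] [InnerProductSpace ℂ H_B] [FiniteDimensional ℂ H_B]

theorem CHSH_op_eq_chshOperator (A0 A1 : H_A →ₗ[ℂ] H_A) (B0 B1 : H_B →ₗ[ℂ] H_B) :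
    CHSH_op A0 A1 B0 B1 = chshOperator (A0.rTensor H_B) (A1.rTensor H_B) (B0.lTensor H_A)
      (B1.lTensor H_A) := by
  simp only [CHSH_op, chshOperator, Module.End.mul_eq_comp, LinearMap.rTensor_comp_lTensor]

theorem CHSHStrategy.isCommutingStrategy (S : CHSHStrategy H_A H_B) :
    IsCommutingStrategy (S.A0.rTensor H_B) (S.A1.rTensor H_B) (S.B0.lTensor H_A)
      (S.B1.lTensor H_A) where
  A0_bin := S.A0_bin.tensorMap isBinaryObservable_id
  A1_bin := S.A1_bin.tensorMap isBinaryObservable_id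
  B0_bin := isBinaryObservable_id.tensorMap S.B0_bin
  B1_bin := isBinaryObservable_id.tensorMap S.B1_bin
  comm00 := commute_rTensor_lTensor _ _
  comm01 := commute_rTensor_lTensor _ _
  comm10 := commute_rTensor_lTensor _ _
  comm11 := commute_rTensor_lTensor _ _

end CHSHStrategy

section Qubit

open Real

@[simp] theorem inner_ket0_ket1 : ⟪ket0, ket1⟫ = 0 := by
  simp [ket0, ket1, EuclideanSpace.inner_single_left]
@[simp] theorem inner_ket1_ket0 : ⟪ket1, ket0⟫ = 0 := by
  simp [ket0, ket1, EuclideanSpace.inner_single_left]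
@[simp] theorem norm_ket0 : ‖ket0‖ = 1 := by simp [ket0]
@[simp] theorem norm_ket1 : ‖ket1‖ = 1 := by simp [ket1]

theorem ketbra_apply {H : Type*} [NormedAddCommGroup H] [InnerProductSpace ℂ H] (a b v : H) :
    ketbra a b v = ⟪b, v⟫ • a := rfl

theorem inner_ketbra_left {H : Type*} [NormedAddCommGroup H] [InnerProductSpace ℂ H]
    (a b x y : H) : ⟪ketbra a b x, y⟫ = ⟪x, ketbra b a y⟫ := by
  rw [ketbra_apply, ketbra_apply, inner_smul_left, inner_smul_right, inner_conj_symm, mul_comm]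

@[simp] theorem pauliX_ket0 : pauliX ket0 = ket1 := by simp [pauliX, ketbra_apply]
@[simp] theorem pauliX_ket1 : pauliX ket1 = ket0 := by simp [pauliX, ketbra_apply]
@[simp] theorem pauliZ_ket0 : pauliZ ket0 = ket0 := by simp [pauliZ, ketbra_apply]
@[simp] theorem pauliZ_ket1 : pauliZ ket1 = -ket1 := by simp [pauliZ, ketbra_apply]
@[simp] theorem proj0_ket0 : proj0 ket0 = ket0 := by simp [proj0, ketbra_apply]
@[simp] theorem proj0_ket1 : proj0 ket1 = 0 := by simp [proj0, ketbra_apply]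
@[simp] theorem proj1_ket0 : proj1 ket0 = 0 := by simp [proj1, ketbra_apply]
@[simp] theorem proj1_ket1 : proj1 ket1 = ket1 := by simp [proj1, ketbra_apply]

theorem Hadamard_ket0 : Hadamard ket0 = ((√2 : ℝ) : ℂ)⁻¹ • (ket0 + ket1) := by
  simp [Hadamard]

theorem Hadamard_ket1 : Hadamard ket1 = ((√2 : ℝ) : ℂ)⁻¹ • (ket0 - ket1) := by
  simp [Hadamard, sub_eq_add_neg]
  module

theorem Rotation_ket0 :
    Rotation ket0 = (sin (π / 8) : ℂ) • ket1 + (cos (π / 8) : ℂ) • ket0 := by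
  simp only [Rotation, LinearMap.add_apply, LinearMap.smul_apply, pauliX_ket0, pauliZ_ket0]

theorem Rotation_ket1 :
    Rotation ket1 = (sin (π / 8) : ℂ) • ket0 - (cos (π / 8) : ℂ) • ket1 := by
  simp only [Rotation, LinearMap.add_apply, LinearMap.smul_apply, pauliX_ket1, pauliZ_ket1,
    smul_neg, sub_eq_add_neg]

theorem qubit_linearMap_ext {M : Type*} [AddCommGroup M] [Module ℂ M] {f g : Qubit →ₗ[ℂ] M}
    (h0 : f ket0 = g ket0) (h1 : f ket1 = g ket1) : f = g :=
  (EuclideanSpace.basisFun (Fin 2) ℂ).toBasis.ext fun i => by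
    fin_cases i
    exacts [by simpa [ket0] using h0, by simpa [ket1] using h1]

theorem pauliZ_isSymmetric : pauliZ.IsSymmetric := fun x y => by
  simp only [pauliZ, LinearMap.sub_apply, inner_sub_left, inner_sub_right, inner_ketbra_left]

theorem pauliX_isSymmetric : pauliX.IsSymmetric := fun x y => by
  simp only [pauliX, LinearMap.add_apply, inner_add_left, inner_add_right, inner_ketbra_left,
    add_comm]

theorem isBinaryObservable_Rotation : IsBinaryObservable Rotation where
  symm := (pauliX_isSymmetric.smul (Complex.conj_ofReal _)).add
    (pauliZ_isSymmetric.smul (Complex.conj_ofReal _))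
  sq_one := by
    apply qubit_linearMap_ext <;>
    · simp only [LinearMap.comp_apply, LinearMap.id_apply, Rotation_ket0, Rotation_ket1, map_add,
        map_sub, map_smul]
      match_scalars
      · linear_combination Complex.sin_sq_add_cos_sq ((π : ℂ) / 8)
      · ring

theorem sin_pi_div_eight_eq_div_sqrt_two :
    sin (π / 8) = (cos (π / 8) - sin (π / 8)) / √2 := by
  have h := sin_sub (π / 4) (π / 8)
  rw [show π / 4 - π / 8 = π / 8 by ring, sin_pi_div_four, cos_pi_div_four] at h
  rw [eq_div_iff (by positivity)]
  linear_combination √2 * h + (cos (π / 8) - sin (π / 8)) / 2 * Real.mul_self_sqrt zero_le_two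

theorem cos_pi_div_eight_eq_div_sqrt_two :
    cos (π / 8) = (cos (π / 8) + sin (π / 8)) / √2 := by
  have h := cos_sub (π / 4) (π / 8)
  rw [show π / 4 - π / 8 = π / 8 by ring, sin_pi_div_four, cos_pi_div_four] at h
  rw [eq_div_iff (by positivity)]
  linear_combination √2 * h + (cos (π / 8) + sin (π / 8)) / 2 * Real.mul_self_sqrt zero_le_two

theorem HadamardPrime_comp_Rotation : HadamardPrime ∘ₗ Rotation = Rotation ∘ₗ pauliX := by
  have hs := congrArg Complex.ofReal sin_pi_div_eight_eq_div_sqrt_two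
  have hc := congrArg Complex.ofReal cos_pi_div_eight_eq_div_sqrt_two
  push_cast at hs hc
  apply qubit_linearMap_ext <;>
    simp only [HadamardPrime, LinearMap.comp_apply, LinearMap.smul_apply, LinearMap.sub_apply,
      Rotation_ket0, Rotation_ket1, pauliX_ket0, pauliX_ket1, map_add, map_sub, map_smul,
      pauliZ_ket0, pauliZ_ket1] <;>
    match_scalars
  exacts [by linear_combination hc, by linear_combination -hs, by linear_combination -hc,
    by linear_combination -hs]

end Qubit

section Extractor

variable {H : Type*} [NormedAddCommGroup H] [InnerProductSpace ℂ H]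

theorem norm_embed [FiniteDimensional ℂ H] {a : Qubit} (ha : ‖a‖ = 1) (v : H) :
    ‖embed a v‖ = ‖v‖ := by
  rw [embed, TensorProduct.mk_apply, norm_tmul_tensor, ha, one_mul]

theorem controlGate_ket0_tmul (A : H →ₗ[ℂ] H) (v : H) :
    controlGate A (ket0 ⊗ₜ[ℂ] v) = ket0 ⊗ₜ[ℂ] v := by
  simp [controlGate]

theorem controlGate_ket1_tmul (A : H →ₗ[ℂ] H) (v : H) :
    controlGate A (ket1 ⊗ₜ[ℂ] v) = ket1 ⊗ₜ[ℂ] A v := by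
  simp [controlGate]

theorem VA_apply (A0 A1 : H →ₗ[ℂ] H) (v : H) :
    VA A0 A1 v = (2 : ℂ)⁻¹ • (ket0 ⊗ₜ[ℂ] (v + A0 v) + ket1 ⊗ₜ[ℂ] (A1 v - A1 (A0 v))) := by
  have h2 : ((√2 : ℝ) : ℂ)⁻¹ * ((√2 : ℝ) : ℂ)⁻¹ = (2 : ℂ)⁻¹ := by
    rw [← mul_inv, ← Complex.ofReal_mul, Real.mul_self_sqrt zero_le_two, Complex.ofReal_ofNat]
  simp only [VA, unitaryUA, embed, LinearMap.comp_apply, TensorProduct.mk_apply,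
    TensorProduct.map_tmul, LinearMap.id_apply, Hadamard_ket0, Hadamard_ket1,
    ← TensorProduct.smul_tmul', TensorProduct.add_tmul, TensorProduct.sub_tmul, map_smul, map_add,
    map_sub, controlGate_ket0_tmul, controlGate_ket1_tmul, TensorProduct.tmul_add,
    TensorProduct.tmul_sub]
  match_scalars <;> simp only [mul_one, mul_neg, h2]

theorem VB_eq_map_Rotation_comp_VA [FiniteDimensional ℂ H] (B0 B1 : H →ₗ[ℂ] H) :
    VB B0 B1 = TensorProduct.map Rotation LinearMap.id ∘ₗ VA B0 B1 := by
  have h : LinearMap.adjoint Rotation auxState = ket0 := by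
    rw [isBinaryObservable_Rotation.symm.adjoint_eq, auxState,
      isBinaryObservable_Rotation.apply_apply]
  ext v
  simp only [VB, unitaryUB, VA, embed, LinearMap.comp_apply, TensorProduct.mk_apply,
    TensorProduct.map_tmul, LinearMap.id_apply, h]

theorem map_HadamardPrime_comp_VB_sub_VB_comp [FiniteDimensional ℂ H] {B0 B1 : H →ₗ[ℂ] H}
    (hB1 : IsBinaryObservable B1) :
    TensorProduct.map HadamardPrime LinearMap.id ∘ₗ VB B0 B1 - VB B0 B1 ∘ₗ B1
      = TensorProduct.map Rotation LinearMap.id ∘ₗ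
          (((2 : ℂ)⁻¹ • (embed ket1 ∘ₗ B1 - embed ket0)) ∘ₗ (B0 * B1 + B1 * B0)) := by
  have hH'R (x : Qubit ⊗[ℂ] H) : TensorProduct.map HadamardPrime LinearMap.id
      (TensorProduct.map Rotation LinearMap.id x)
        = TensorProduct.map Rotation LinearMap.id (TensorProduct.map pauliX LinearMap.id x) := by
    rw [← LinearMap.comp_apply, ← TensorProduct.map_comp, HadamardPrime_comp_Rotation,
      TensorProduct.map_comp, LinearMap.comp_apply]
  ext v
  simp only [LinearMap.sub_apply, LinearMap.comp_apply, VB_eq_map_Rotation_comp_VA, hH'R,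
    ← map_sub]
  congr 1
  simp only [VA_apply, map_smul, map_add, map_sub, TensorProduct.map_tmul, pauliX_ket0,
    pauliX_ket1, LinearMap.id_apply, LinearMap.comp_apply, LinearMap.smul_apply,
    LinearMap.sub_apply, LinearMap.add_apply, Module.End.mul_apply, embed,
    TensorProduct.mk_apply, hB1.apply_apply, TensorProduct.tmul_add, TensorProduct.tmul_sub]
  module

end Extractor

theorem B1_approx_intertwine_general
    {H_A H_B : Type*}
    [NormedAddCommGroup H_A] [InnerProductSpace ℂ H_A] [FiniteDimensional ℂ H_A]
    [NormedAddCommGroup H_B] [InnerProductSpace ℂ H_B] [FiniteDimensional ℂ H_B]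
    (S : CHSHStrategy H_A H_B) (ε : ℝ)
    (hBias : chshBias S ≥ 2 * Real.sqrt 2 - ε) :
    ‖(TensorProduct.map (LinearMap.id : H_A →ₗ[ℂ] H_A)
        ((TensorProduct.map HadamardPrime (LinearMap.id : H_B →ₗ[ℂ] H_B)) ∘ₗ VB S.B0 S.B1
          - VB S.B0 S.B1 ∘ₗ S.B1)) S.psi‖ ≤ Real.sqrt (cConst * ε) := by
  have hβ := hBias
  rw [ge_iff_le, chshBias, ← inner_tensorInnerProductSpace, CHSH_op_eq_chshOperator] at hβ
  have hP := S.isCommutingStrategy.norm_anticomm_sq_le S.psi_norm hβ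
  rw [← LinearMap.lTensor_mul, ← LinearMap.lTensor_mul, ← LinearMap.lTensor_add] at hP
  have hR (z : H_A ⊗[ℂ] (Qubit ⊗[ℂ] H_B)) :
      ‖(TensorProduct.map Rotation LinearMap.id).lTensor H_A z‖ = ‖z‖ :=
    norm_tensorMap (fun _ => rfl) (norm_tensorMap isBinaryObservable_Rotation.norm_map
      (fun _ => rfl)) z
  have hB1 (v : H_B) : ‖(embed ket1 ∘ₗ S.B1) v‖ = ‖v‖ :=
    (norm_embed norm_ket1 _).trans (S.B1_bin.norm_map v)
  rw [map_HadamardPrime_comp_VB_sub_VB_comp S.B1_bin, ← LinearMap.lTensor_def,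
    LinearMap.lTensor_comp, LinearMap.lTensor_comp, LinearMap.comp_apply, LinearMap.comp_apply, hR]
  refine (norm_lTensor_half_sub_le hB1 (norm_embed norm_ket0) _).trans
    (Real.le_sqrt_of_sq_le (hP.trans ?_))
  have hε : 0 ≤ 8 * √2 * ε := (sq_nonneg _).trans hP
  rw [cConst]
  linarith

/-- **Approximate intertwining for `B1`.** -/
theorem B1_approx_intertwine
    {H_A H_B : Type*}
    [NormedAddCommGroup H_A] [InnerProductSpace ℂ H_A] [FiniteDimensional ℂ H_A]
    [NormedAddCommGroup H_B] [InnerProductSpace ℂ H_B] [FiniteDimensional ℂ H_B]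
    (S : CHSHStrategy H_A H_B) (ε : ℝ) (hε : 0 ≤ ε)
    (hBias : chshBias S ≥ 2 * Real.sqrt 2 - ε) :
    ‖(TensorProduct.map (LinearMap.id : H_A →ₗ[ℂ] H_A)
        ((TensorProduct.map HadamardPrime (LinearMap.id : H_B →ₗ[ℂ] H_B)) ∘ₗ VB S.B0 S.B1
          - VB S.B0 S.B1 ∘ₗ S.B1)) S.psi‖ ≤ Real.sqrt (cConst * ε) :=
  B1_approx_intertwine_general S ε hBias
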